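/- Let T ⊂ ℝ^d be a nonempty closed convex set containing the origin. Then for every x ∈ ℝ^d and every σ > 0, sup_{t ∈ T} ⟨x, t⟩ = sup_{t ∈ T}{⟨x,t⟩ − ‖t‖²/(2σ)} + (1/2) ∫_σ^∞ ‖Π_{T/ν}(x)‖² dν, and in particular sup_{t ∈ T}⟨x,t⟩ = (1/2)∫_0^∞ ‖Π_{T/ν}(x)‖² dν, where both sides may be +∞. -/

import Mathlib

/-!
Write `q ν` for the nearest point of `T` to `ν • x`, so that `Π_{T/ν}(x) = q ν / ν`, and
`g ν = sup_{t ∈ T} ⟨x, t⟩ - ‖t‖² / (2ν)`. Expanding `‖ν • x - t‖²` shows that `g ν` is attained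
at `q ν`. Testing the maximiser at `σ` in the problem at `τ` gives
`g τ - g σ ≥ ‖q σ‖² / 2 · (1/σ - 1/τ)`, and swapping `σ` and `τ` bounds the difference from above.
Since `ν ↦ q ν` is Lipschitz (the projection is nonexpansive), `g` is differentiable with
`g' ν = ‖q ν‖² / (2ν²) = ‖Π_{T/ν}(x)‖² / 2`, and the fundamental theorem of calculus gives
`g M - g σ = ½ ∫_σ^M ‖Π_{T/ν}(x)‖² dν`. As `M → ∞`, `g M` increases to `h(x)`, and as `σ → 0`,
`0 ≤ g σ ≤ σ‖x‖²/2` tends to `0`; these two limits give the two formulas.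
-/

open MeasureTheory Set Filter Topology Asymptotics
open scoped ENNReal Pointwise RealInnerProductSpace

noncomputable section

theorem hasDerivAt_of_mul_sub_le_sub {g u φ : ℝ → ℝ} {s : Set ℝ} {ν u' : ℝ} (hs : s ∈ 𝓝 ν)
    (hu : HasDerivAt u u' ν) (hφ : ContinuousAt φ ν)
    (h : ∀ σ ∈ s, ∀ τ ∈ s, φ σ * (u τ - u σ) ≤ g τ - g σ) :
    HasDerivAt g (φ ν * u') ν := by
  rw [hasDerivAt_iff_isLittleO] at hu ⊢
  have hν : ν ∈ s := mem_of_mem_nhds hs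
  -- applying `h` both ways squeezes the error between `0` and `(φ τ - φ ν) * (u τ - u ν)`
  have hsq : (fun τ => g τ - g ν - φ ν * (u τ - u ν)) =O[𝓝 ν]
      fun τ => (φ τ - φ ν) * (u τ - u ν) := by
    refine IsBigO.of_bound' ?_
    filter_upwards [hs] with τ hτ
    have lower := h ν hν τ hτ
    have upper := h τ hτ ν hν
    rw [Real.norm_of_nonneg (by linarith), Real.norm_of_nonneg (by nlinarith)]
    nlinarith
  have hsmall : (fun τ => (φ τ - φ ν) * (u τ - u ν)) =o[𝓝 ν] fun τ => τ - ν := by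
    have hφ' : (fun τ => φ τ - φ ν) =o[𝓝 ν] fun _ => (1 : ℝ) :=
      (isLittleO_one_iff ℝ).2 (tendsto_sub_nhds_zero_iff.2 hφ)
    simpa using hφ'.mul_isBigO (hasDerivAt_iff_isLittleO.2 hu).isBigO_sub
  refine (hsq.trans_isLittleO hsmall).add (hu.const_mul_left (φ ν)) |>.congr_left fun τ => ?_
  simp only [smul_eq_mul]
  ring

theorem tendsto_setLIntegral_Ioc_atTop (μ : Measure ℝ) (f : ℝ → ℝ≥0∞) (a : ℝ) :
    Tendsto (fun b => ∫⁻ t in Ioc a b, f t ∂μ) atTop (𝓝 (∫⁻ t in Ioi a, f t ∂μ)) := by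
  have := tendsto_measure_iUnion_atTop (μ := μ.withDensity f)
    (antitone_const.Ioc monotone_id : Monotone fun b => Ioc a b)
  simpa only [iUnion_Ioc_right, withDensity_apply f measurableSet_Ioi, Function.comp_def,
    withDensity_apply f measurableSet_Ioc] using this

theorem tendsto_setLIntegral_Ioi_nhdsGT (μ : Measure ℝ) (f : ℝ → ℝ≥0∞) (a : ℝ) :
    Tendsto (fun b => ∫⁻ t in Ioi b, f t ∂μ) (𝓝[>] a) (𝓝 (∫⁻ t in Ioi a, f t ∂μ)) := by
  have := tendsto_measure_iUnion_atBot (μ := μ.withDensity f)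
    (fun (b c : Ioi a) (hbc : b ≤ c) => Ioi_subset_Ioi hbc : Antitone fun b : Ioi a => Ioi (b : ℝ))
  have hunion : ⋃ b : Ioi a, Ioi (b : ℝ) = Ioi a :=
    IsGLB.iUnion_Ioi_eq (by rw [Subtype.range_coe]; exact isGLB_Ioi)
  rw [← tendsto_comp_coe_Ioi_atBot]
  simpa only [hunion, withDensity_apply f measurableSet_Ioi, Function.comp_def] using this

variable {F : Type*} [NormedAddCommGroup F] [InnerProductSpace ℝ F] {K : Set F} {x : F}

def IsNearestPoint (K : Set F) (y p : F) : Prop :=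
  p ∈ K ∧ ∀ t ∈ K, dist y p ≤ dist y t

/-- The Moreau envelope, with parameter `1 / ν`, of the support function of `K`, evaluated at `x`. -/
def supportEnvelope (K : Set F) (x : F) (ν : ℝ) : ℝ :=
  ⨆ t : K, ⟪x, (t : F)⟫ - ‖(t : F)‖ ^ 2 / (2 * ν)

namespace IsNearestPoint

variable {y p : F} {ν : ℝ}

theorem inner_sub_nonpos (hK : Convex ℝ K) (h : IsNearestPoint K y p) {t : F} (ht : t ∈ K) :
    ⟪y - p, t - p⟫ ≤ 0 := by
  have : Nonempty K := ⟨⟨p, h.1⟩⟩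
  refine (norm_eq_iInf_iff_real_inner_le_zero hK h.1).1 ?_ t ht
  refine le_antisymm (le_ciInf fun s => by simpa [dist_eq_norm] using h.2 s s.2) ?_
  have hbdd : BddBelow (range fun s : K => ‖y - s‖) := ⟨0, by rintro _ ⟨s, rfl⟩; positivity⟩
  exact ciInf_le hbdd ⟨p, h.1⟩

theorem norm_sub_le (hK : Convex ℝ K) {y₁ y₂ p₁ p₂ : F} (h₁ : IsNearestPoint K y₁ p₁)
    (h₂ : IsNearestPoint K y₂ p₂) : ‖p₁ - p₂‖ ≤ ‖y₁ - y₂‖ := by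
  have i₁ := h₁.inner_sub_nonpos hK h₂.1
  have i₂ := h₂.inner_sub_nonpos hK h₁.1
  have key : ‖p₁ - p₂‖ ^ 2 ≤ ⟪y₁ - y₂, p₁ - p₂⟫ := by
    have hs := real_inner_self_eq_norm_sq (p₁ - p₂)
    simp only [inner_sub_left, inner_sub_right] at i₁ i₂ hs ⊢
    linarith [real_inner_comm y₁ p₁, real_inner_comm y₁ p₂, real_inner_comm y₂ p₁,
      real_inner_comm y₂ p₂, real_inner_comm p₁ p₂]
  nlinarith [real_inner_le_norm (y₁ - y₂) (p₁ - p₂), norm_nonneg (p₁ - p₂),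
    norm_nonneg (y₁ - y₂)]

theorem smul_of_inv_smul {c : ℝ} (hc : c ≠ 0) (h : IsNearestPoint (c⁻¹ • K) y p) :
    IsNearestPoint K (c • y) (c • p) := by
  obtain ⟨⟨t, ht, rfl⟩, hmin⟩ := h
  refine ⟨by rwa [smul_inv_smul₀ hc], fun s hs => ?_⟩
  have := hmin (c⁻¹ • s) (smul_mem_smul_set hs)
  rw [← smul_inv_smul₀ hc s, dist_smul₀, dist_smul₀]
  exact mul_le_mul_of_nonneg_left this (norm_nonneg c)

theorem isMaxOn (hν : 0 < ν) (h : IsNearestPoint K (ν • x) p) :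
    IsMaxOn (fun t => ⟪x, t⟫ - ‖t‖ ^ 2 / (2 * ν)) K p := by
  have expand : ∀ t : F,
      ‖ν • x - t‖ ^ 2 = ν ^ 2 * ‖x‖ ^ 2 - 2 * ν * (⟪x, t⟫ - ‖t‖ ^ 2 / (2 * ν)) := by
    intro t
    rw [norm_sub_sq_real, norm_smul, real_inner_smul_left, Real.norm_eq_abs, mul_pow, sq_abs]
    field_simp
    ring
  refine isMaxOn_iff.2 fun t ht => ?_
  have hsq := pow_le_pow_left₀ dist_nonneg (h.2 t ht) 2
  rw [dist_eq_norm, dist_eq_norm, expand, expand] at hsq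
  nlinarith

theorem supportEnvelope_eq (hν : 0 < ν) (h : IsNearestPoint K (ν • x) p) :
    supportEnvelope K x ν = ⟪x, p⟫ - ‖p‖ ^ 2 / (2 * ν) := by
  have : Nonempty K := ⟨⟨p, h.1⟩⟩
  have hmax := h.isMaxOn hν
  have hbdd : BddAbove (range fun t : K => ⟪x, (t : F)⟫ - ‖(t : F)‖ ^ 2 / (2 * ν)) :=
    ⟨_, by rintro _ ⟨t, rfl⟩; exact hmax t.2⟩
  exact le_antisymm (ciSup_le fun t => hmax t.2) (le_ciSup hbdd ⟨p, h.1⟩)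

theorem supportEnvelope_nonneg (h0 : (0 : F) ∈ K) (hν : 0 < ν)
    (h : IsNearestPoint K (ν • x) p) : 0 ≤ supportEnvelope K x ν := by
  rw [h.supportEnvelope_eq hν]
  simpa using h.isMaxOn hν h0

theorem supportEnvelope_le (hν : 0 < ν) (h : IsNearestPoint K (ν • x) p) :
    supportEnvelope K x ν ≤ ν * ‖x‖ ^ 2 / 2 := by
  have amgm : ⟪x, p⟫ - ν * ‖x‖ ^ 2 / 2 ≤ ‖p‖ ^ 2 / (2 * ν) := by
    rw [le_div_iff₀ (by positivity)]
    nlinarith [real_inner_le_norm x p, sq_nonneg (ν * ‖x‖ - ‖p‖)]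
  rw [h.supportEnvelope_eq hν]
  linarith

theorem le_supportEnvelope_sub {σ τ : ℝ} {q : F} (hσ : 0 < σ) (hτ : 0 < τ)
    (hp : IsNearestPoint K (σ • x) p) (hq : IsNearestPoint K (τ • x) q) :
    ‖p‖ ^ 2 / 2 * (σ⁻¹ - τ⁻¹) ≤ supportEnvelope K x τ - supportEnvelope K x σ := by
  have := (isMaxOn_iff.1 (hq.isMaxOn hτ)) p hp.1
  have split : ‖p‖ ^ 2 / 2 * (σ⁻¹ - τ⁻¹) = ‖p‖ ^ 2 / (2 * σ) - ‖p‖ ^ 2 / (2 * τ) := by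
    field_simp
  rw [hp.supportEnvelope_eq hσ, hq.supportEnvelope_eq hτ, split]
  linarith

end IsNearestPoint

section NearestPointFamily

variable {p : ℝ → F} (hK : Convex ℝ K) (hp : ∀ ν, 0 < ν → IsNearestPoint (ν⁻¹ • K) x (p ν))
include hp

theorem monotoneOn_supportEnvelope : MonotoneOn (supportEnvelope K x) (Ioi 0) := by
  intro σ hσ τ hτ hστ
  have hgap := ((hp σ hσ).smul_of_inv_smul hσ.ne').le_supportEnvelope_sub hσ hτ
    ((hp τ hτ).smul_of_inv_smul hτ.ne')
  have : 0 ≤ ‖σ • p σ‖ ^ 2 / 2 * (σ⁻¹ - τ⁻¹) :=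
    mul_nonneg (by positivity) (sub_nonneg.2 (inv_anti₀ hσ hστ))
  linarith

theorem tendsto_ofReal_supportEnvelope_atTop :
    Tendsto (fun ν => ENNReal.ofReal (supportEnvelope K x ν)) atTop
      (𝓝 (⨆ t : K, ENNReal.ofReal ⟪x, (t : F)⟫)) := by
  refine tendsto_order.2 ⟨fun b hb => ?_, fun b hb => ?_⟩
  · obtain ⟨t, ht⟩ := lt_iSup_iff.1 hb
    have hpen : Tendsto (fun ν => ENNReal.ofReal (⟪x, (t : F)⟫ - ‖(t : F)‖ ^ 2 / (2 * ν))) atTop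
        (𝓝 (ENNReal.ofReal ⟪x, (t : F)⟫)) := by
      refine ENNReal.tendsto_ofReal ?_
      simpa using tendsto_const_nhds.sub
        (tendsto_const_nhds.div_atTop (tendsto_id.const_mul_atTop (two_pos : (0 : ℝ) < 2)))
    filter_upwards [hpen.eventually (lt_mem_nhds ht), eventually_gt_atTop 0] with ν hbν hν
    have hq := (hp ν hν).smul_of_inv_smul hν.ne'
    refine hbν.trans_le (ENNReal.ofReal_le_ofReal ?_)
    rw [hq.supportEnvelope_eq hν]
    exact hq.isMaxOn hν t.2
  · filter_upwards [eventually_gt_atTop 0] with ν hν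
    have hq := (hp ν hν).smul_of_inv_smul hν.ne'
    refine lt_of_le_of_lt ?_ hb
    calc ENNReal.ofReal (supportEnvelope K x ν) ≤ ENNReal.ofReal ⟪x, ν • p ν⟫ := by
          rw [hq.supportEnvelope_eq hν]
          exact ENNReal.ofReal_le_ofReal (sub_le_self _ (by positivity))
      _ ≤ ⨆ t : K, ENNReal.ofReal ⟪x, (t : F)⟫ :=
          le_iSup (fun t : K => ENNReal.ofReal ⟪x, (t : F)⟫) ⟨_, hq.1⟩

theorem tendsto_supportEnvelope_nhdsGT_zero (h0 : (0 : F) ∈ K) :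
    Tendsto (supportEnvelope K x) (𝓝[>] 0) (𝓝 0) := by
  have hbound : Tendsto (fun ν : ℝ => ν * ‖x‖ ^ 2 / 2) (𝓝[>] 0) (𝓝 0) := by
    have : Tendsto (fun ν : ℝ => ν * ‖x‖ ^ 2 / 2) (𝓝 0) (𝓝 (0 * ‖x‖ ^ 2 / 2)) :=
      ((continuous_id.mul continuous_const).div_const 2).tendsto 0
    simpa using this.mono_left nhdsWithin_le_nhds
  refine tendsto_of_tendsto_of_tendsto_of_le_of_le' tendsto_const_nhds hbound ?_ ?_
  · filter_upwards [self_mem_nhdsWithin] with ν hν using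
      ((hp ν hν).smul_of_inv_smul hν.ne').supportEnvelope_nonneg h0 hν
  · filter_upwards [self_mem_nhdsWithin] with ν hν using
      ((hp ν hν).smul_of_inv_smul hν.ne').supportEnvelope_le hν

include hK

theorem continuousOn_smul_of_isNearestPoint : ContinuousOn (fun ν => ν • p ν) (Ioi 0) := by
  refine LipschitzOnWith.continuousOn (K := ‖x‖₊) <|
    LipschitzOnWith.of_dist_le_mul fun σ hσ τ hτ => ?_
  calc dist (σ • p σ) (τ • p τ) ≤ ‖σ • x - τ • x‖ := by
        rw [dist_eq_norm]
        exact ((hp σ hσ).smul_of_inv_smul hσ.ne').norm_sub_le hK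
          ((hp τ hτ).smul_of_inv_smul hτ.ne')
    _ = ‖x‖₊ * dist σ τ := by
        rw [← sub_smul, norm_smul, mul_comm, Real.dist_eq, coe_nnnorm, Real.norm_eq_abs]

theorem hasDerivAt_supportEnvelope {ν : ℝ} (hν : 0 < ν) :
    HasDerivAt (supportEnvelope K x) (‖p ν‖ ^ 2 / 2) ν := by
  have hφ : ContinuousAt (fun σ => ‖σ • p σ‖ ^ 2 / 2) ν :=
    (((continuousOn_smul_of_isNearestPoint hK hp).continuousAt
      (Ioi_mem_nhds hν)).norm.pow 2).div_const 2
  -- as a function of `-1/ν`, the envelope has supergradient `‖ν • p ν‖² / 2`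
  have := hasDerivAt_of_mul_sub_le_sub (g := supportEnvelope K x) (Ioi_mem_nhds hν)
    (hasDerivAt_inv hν.ne').neg hφ fun σ hσ τ hτ => by
      simpa only [Pi.neg_apply, neg_sub_neg] using
        ((hp σ hσ).smul_of_inv_smul hσ.ne').le_supportEnvelope_sub hσ hτ
          ((hp τ hτ).smul_of_inv_smul hτ.ne')
  convert this using 1
  rw [norm_smul, Real.norm_of_nonneg hν.le]
  field_simp

theorem ofReal_supportEnvelope_sub_eq_lintegral {σ M : ℝ} (hσ : 0 < σ) (hσM : σ ≤ M) :
    ENNReal.ofReal (supportEnvelope K x M - supportEnvelope K x σ) =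
      1 / 2 * ∫⁻ ν in Ioc σ M, ENNReal.ofReal (‖p ν‖ ^ 2) := by
  have hderiv : ∀ ν ∈ Icc σ M, HasDerivAt (supportEnvelope K x) (‖p ν‖ ^ 2 / 2) ν :=
    fun ν hν => hasDerivAt_supportEnvelope hK hp (hσ.trans_le hν.1)
  have hcont : ContinuousOn (supportEnvelope K x) (Icc σ M) :=
    fun ν hν => (hderiv ν hν).continuousAt.continuousWithinAt
  have hderiv' := fun ν (hν : ν ∈ Ioo σ M) => hderiv ν (Ioo_subset_Icc_self hν)
  have hint := intervalIntegral.integrableOn_deriv_of_nonneg hcont hderiv' fun ν _ => by positivity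
  have hftc := intervalIntegral.integral_eq_sub_of_hasDerivAt_of_le hσM hcont hderiv'
    ((intervalIntegrable_iff_integrableOn_Ioc_of_le hσM).2 hint)
  rw [intervalIntegral.integral_of_le hσM] at hftc
  rw [← hftc, ofReal_integral_eq_lintegral_ofReal hint (ae_of_all _ fun ν => by positivity),
    ← lintegral_const_mul' _ _ (by simp)]
  congr 1 with ν
  rw [div_eq_inv_mul, ENNReal.ofReal_mul (by positivity), ENNReal.ofReal_inv_of_pos two_pos,
    ENNReal.ofReal_ofNat, one_div]

theorem iSup_ofReal_inner_eq_add_lintegral (h0 : (0 : F) ∈ K) {σ : ℝ} (hσ : 0 < σ) :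
    ⨆ t : K, ENNReal.ofReal ⟪x, (t : F)⟫ =
      ENNReal.ofReal (supportEnvelope K x σ) +
        1 / 2 * ∫⁻ ν in Ioi σ, ENNReal.ofReal (‖p ν‖ ^ 2) := by
  have hlim := tendsto_const_nhds (x := ENNReal.ofReal (supportEnvelope K x σ)) |>.add <|
    ENNReal.Tendsto.const_mul (a := 1 / 2)
      (tendsto_setLIntegral_Ioc_atTop volume (fun ν => ENNReal.ofReal (‖p ν‖ ^ 2)) σ)
      (Or.inr (by simp))
  refine tendsto_nhds_unique (tendsto_ofReal_supportEnvelope_atTop hp) (hlim.congr' ?_)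
  filter_upwards [eventually_ge_atTop σ] with M hM
  rw [← ofReal_supportEnvelope_sub_eq_lintegral hK hp hσ hM, ← ENNReal.ofReal_add
    (((hp σ hσ).smul_of_inv_smul hσ.ne').supportEnvelope_nonneg h0 hσ)
    (sub_nonneg.2 (monotoneOn_supportEnvelope hp hσ (hσ.trans_le hM) hM)), add_sub_cancel]

theorem iSup_ofReal_inner_eq_lintegral (h0 : (0 : F) ∈ K) :
    ⨆ t : K, ENNReal.ofReal ⟪x, (t : F)⟫ =
      1 / 2 * ∫⁻ ν in Ioi 0, ENNReal.ofReal (‖p ν‖ ^ 2) := by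
  have hlim := (ENNReal.tendsto_ofReal (tendsto_supportEnvelope_nhdsGT_zero hp h0)).add <|
    ENNReal.Tendsto.const_mul (a := 1 / 2)
      (tendsto_setLIntegral_Ioi_nhdsGT volume (fun ν => ENNReal.ofReal (‖p ν‖ ^ 2)) 0)
      (Or.inr (by simp))
  rw [ENNReal.ofReal_zero, zero_add] at hlim
  refine tendsto_nhds_unique (tendsto_const_nhds.congr' ?_) hlim
  filter_upwards [self_mem_nhdsWithin] with σ hσ
  exact iSup_ofReal_inner_eq_add_lintegral hK hp h0 hσ

end NearestPointFamily

theorem statement3 {d : ℕ} (T : Set (EuclideanSpace ℝ (Fin d)))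
    (hconv : Convex ℝ T)
    (h0 : (0 : EuclideanSpace ℝ (Fin d)) ∈ T)
    (proj : ℝ → EuclideanSpace ℝ (Fin d) → EuclideanSpace ℝ (Fin d))
    (hproj : ∀ ν : ℝ, 0 < ν → ∀ x, proj ν x ∈ ν⁻¹ • T ∧
      ∀ t ∈ ν⁻¹ • T, dist x (proj ν x) ≤ dist x t) :
    ∀ x : EuclideanSpace ℝ (Fin d),
      (∀ σ : ℝ, 0 < σ →
        (⨆ t : T, ENNReal.ofReal (inner ℝ x (t : EuclideanSpace ℝ (Fin d)) : ℝ)) =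
          ENNReal.ofReal (⨆ t : T,
              ((inner ℝ x (t : EuclideanSpace ℝ (Fin d)) : ℝ)
                - ‖(t : EuclideanSpace ℝ (Fin d))‖ ^ 2 / (2 * σ)))
            + (1 / 2) * ∫⁻ ν in Set.Ioi σ, ENNReal.ofReal (‖proj ν x‖ ^ 2)) ∧
      (⨆ t : T, ENNReal.ofReal (inner ℝ x (t : EuclideanSpace ℝ (Fin d)) : ℝ)) =
        (1 / 2) * ∫⁻ ν in Set.Ioi (0 : ℝ), ENNReal.ofReal (‖proj ν x‖ ^ 2) := by
  intro x
  have hp : ∀ ν : ℝ, 0 < ν → IsNearestPoint (ν⁻¹ • T) x (proj ν x) := fun ν hν => hproj ν hν x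
  exact ⟨fun σ hσ => iSup_ofReal_inner_eq_add_lintegral hconv hp h0 hσ,
    iSup_ofReal_inner_eq_lintegral hconv hp h0⟩
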